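/- Let λ > 0, let u : ℝ → ℝ be a solution of u''(y) = λ²·u(y) for all y, and let x : [0, 1] → ℝ be four times continuously differentiable with x'(q) > 0 for all q ∈ [0, 1]. Assume in addition that the fourth-order (supraconvergence) condition x''(q)·u'''(x(q)) + (1/4)·(x'(q))²·u''''(x(q)) = 0 holds for every q ∈ [0, 1]. Then there exists a constant C > 0 such that for all h ∈ (0, 1/2] and all q ∈ [h, 1 − h], the consistency error satisfies |ψ_h(q)| ≤ C·h⁴; that is, the central difference scheme on the non-uniform grid generated by x is fourth-order consistent. -/

import Mathlib

/-!
Taylor expansion of `u` to sixth order around the central node `x q` shows that the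
non-uniform central difference with steps `h₊, h₋` equals
`u'' + (h₊ - h₋) u⁽³⁾ / 3 + (h₊² - h₊h₋ + h₋²) u⁽⁴⁾ / 12 + (h₊ - h₋)(h₊² + h₋²) u⁽⁵⁾ / 60`
up to `O(h₊⁴ + h₋⁴)`: the remainder stays of fourth order because
`h₊⁵ + h₋⁵ ≤ (h₊ + h₋)(h₊⁴ + h₋⁴)`. Since `u'' = λ²u`, the consistency error is minus the
remaining terms. Expanding `x` to third order around `q` gives `h₊ - h₋ = h²x'' + O(h⁴)` and
`h₊² - h₊h₋ + h₋² = h²x'² + O(h⁴)`, so the `h²` part of the error is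
`(h²/3)(x'' u⁽³⁾ + x'² u⁽⁴⁾ / 4)`, which the supraconvergence condition kills. The equation
makes `u` smooth, and all derivatives involved are bounded by compactness.
-/

open Set Finset Nat
open scoped ContDiff

lemma abs_sub_sum_taylor_le {f : ℝ → ℝ} {x₀ x M : ℝ} {n : ℕ} (hx : x₀ ≠ x)
    (hf : ContDiffOn ℝ (n + 1) f (uIcc x₀ x)) (hf₀ : ContDiffAt ℝ n f x₀)
    (hM : ∀ ξ ∈ uIoo x₀ x, |iteratedDeriv (n + 1) f ξ| ≤ M) :
    |f x - ∑ k ∈ range (n + 1), iteratedDeriv k f x₀ / k ! * (x - x₀) ^ k|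
      ≤ M * |x - x₀| ^ (n + 1) / (n + 1)! := by
  obtain ⟨ξ, hξ, hrem⟩ := taylor_mean_remainder_lagrange_iteratedDeriv hx hf
  have htaylor : taylorWithinEval f n (uIcc x₀ x) x₀ x
      = ∑ k ∈ range (n + 1), iteratedDeriv k f x₀ / k ! * (x - x₀) ^ k := by
    rw [taylor_within_apply]
    refine Finset.sum_congr rfl fun k hk => ?_
    rw [iteratedDerivWithin_eq_iteratedDeriv (uniqueDiffOn_uIcc hx)
      (hf₀.of_le (by exact_mod_cast Nat.lt_succ_iff.mp (mem_range.mp hk))) left_mem_uIcc,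
      smul_eq_mul]
    ring
  rw [← htaylor, hrem, abs_div, abs_mul, abs_pow, Nat.abs_cast]
  gcongr
  exact hM ξ hξ

lemma iteratedDerivWithin_Icc_eq_iteratedDeriv {f : ℝ → ℝ} {a b t : ℝ} {n k : ℕ}
    (hf : ContDiffOn ℝ n f (Icc a b)) (hk : k ≤ n) (ht : t ∈ Ioo a b) :
    iteratedDerivWithin k f (Icc a b) t = iteratedDeriv k f t :=
  iteratedDerivWithin_eq_iteratedDeriv (uniqueDiffOn_Icc (ht.1.trans ht.2))
    ((hf.contDiffAt (Icc_mem_nhds ht.1 ht.2)).of_le (mod_cast hk)) (Ioo_subset_Icc_self ht)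

lemma exists_bound_iteratedDeriv_Ioo {f : ℝ → ℝ} {a b : ℝ} {n : ℕ}
    (hf : ContDiffOn ℝ n f (Icc a b)) :
    ∃ C ≥ 1, ∀ k ≤ n, ∀ y ∈ Ioo a b, |iteratedDeriv k f y| ≤ C := by
  rcases lt_or_ge a b with hab | hba
  · have hs := uniqueDiffOn_Icc hab
    have hcont : ContinuousOn
        (fun y => ∑ k ∈ range (n + 1), |iteratedDerivWithin k f (Icc a b) y|) (Icc a b) :=
      continuousOn_finsetSum _ fun k hk => (hf.continuousOn_iteratedDerivWithin
        (by exact_mod_cast Nat.lt_succ_iff.mp (mem_range.mp hk)) hs).abs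
    obtain ⟨C, hC⟩ := isCompact_Icc.exists_bound_of_continuousOn hcont
    refine ⟨max C 1, le_max_right _ _, fun k hk y hy => ?_⟩
    rw [← iteratedDerivWithin_Icc_eq_iteratedDeriv hf hk hy]
    calc |iteratedDerivWithin k f (Icc a b) y|
        ≤ ∑ j ∈ range (n + 1), |iteratedDerivWithin j f (Icc a b) y| :=
          single_le_sum (f := fun j => |iteratedDerivWithin j f (Icc a b) y|)
            (fun _ _ => abs_nonneg _) (mem_range.mpr (by omega))
      _ ≤ C := (le_abs_self _).trans (hC y (Ioo_subset_Icc_self hy))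
      _ ≤ max C 1 := le_max_left _ _
  · exact ⟨1, le_rfl, fun k _ y hy => absurd (hy.1.trans hy.2) hba.not_gt⟩

lemma contDiff_infty_of_deriv_deriv_eq_mul {u : ℝ → ℝ} {c : ℝ} (hu : ContDiff ℝ 2 u)
    (hode : ∀ y, deriv (deriv u) y = c * u y) : ContDiff ℝ ∞ u := by
  suffices h : ∀ n : ℕ, ContDiff ℝ (n + 2) u by
    exact contDiff_infty.mpr fun n => (h n).of_le (by exact_mod_cast Nat.le_add_right n 2)
  intro n
  induction n with
  | zero => simpa using hu
  | succ n ih =>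
    have hdd : ContDiff ℝ (n + 1) (deriv (deriv u)) := by
      rw [funext hode]
      exact contDiff_const.mul (ih.of_le (by exact_mod_cast Nat.le_succ_of_le le_rfl))
    have hd : ContDiff ℝ (n + 1 + 1) (deriv u) :=
      contDiff_succ_iff_deriv.mpr ⟨hu.differentiable_deriv_two, by simp, hdd⟩
    have := contDiff_succ_iff_deriv.mpr ⟨hu.differentiable (by norm_num), by simp, hd⟩
    exact_mod_cast this

lemma strictMonoOn_Icc_of_derivWithin_pos {f : ℝ → ℝ} {a b : ℝ} (hf : ContinuousOn f (Icc a b))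
    (hf' : ∀ t ∈ Ioo a b, 0 < derivWithin f (Icc a b) t) : StrictMonoOn f (Icc a b) :=
  strictMonoOn_of_deriv_pos (convex_Icc a b) hf fun t ht => by
    rw [interior_Icc] at ht
    rw [← derivWithin_of_mem_nhds (Icc_mem_nhds ht.1 ht.2)]
    exact hf' t ht

lemma StrictMonoOn.grid_nodes {x : ℝ → ℝ} {a b h q : ℝ} (hx : StrictMonoOn x (Icc a b))
    (hh : 0 < h) (ha : a ≤ q - h) (hb : q + h ≤ b) :
    x a ≤ x (q - h) ∧ x (q - h) < x q ∧ x q < x (q + h) ∧ x (q + h) ≤ x b := by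
  have hmem : ∀ t, a ≤ t → t ≤ b → t ∈ Icc a b := fun t hat htb => ⟨hat, htb⟩
  refine ⟨hx.monotoneOn (hmem a le_rfl (by linarith)) (hmem _ ha (by linarith)) ha,
    hx (hmem _ ha (by linarith)) (hmem q (by linarith) (by linarith)) (by linarith),
    hx (hmem q (by linarith) (by linarith)) (hmem _ (by linarith) hb) (by linarith),
    hx.monotoneOn (hmem _ (by linarith) hb) (hmem b (by linarith) le_rfl) hb⟩

noncomputable def centralSecondDiff (f : ℝ → ℝ) (a b c : ℝ) : ℝ :=
  ((f c - f b) / (c - b) - (f b - f a) / (b - a)) / (((c - b) + (b - a)) / 2)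

lemma centralSecondDiff_eq_add_remainder {f : ℝ → ℝ} {b p m Rp Rm : ℝ} (hp : 0 < p) (hm : 0 < m)
    (hfp : f (b + p) = ∑ k ∈ range 6, iteratedDeriv k f b / k ! * p ^ k + Rp)
    (hfm : f (b - m) = ∑ k ∈ range 6, iteratedDeriv k f b / k ! * (-m) ^ k + Rm) :
    centralSecondDiff f (b - m) b (b + p) = iteratedDeriv 2 f b
      + ((p - m) / 3 * iteratedDeriv 3 f b + (p ^ 2 - p * m + m ^ 2) / 12 * iteratedDeriv 4 f b
        + (p - m) * (p ^ 2 + m ^ 2) / 60 * iteratedDeriv 5 f b)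
      + 2 / (p + m) * (Rp / p + Rm / m) := by
  rw [centralSecondDiff, hfp, hfm]
  simp only [Finset.sum_range_succ, Finset.sum_range_zero, iteratedDeriv_zero]
  norm_num [Nat.factorial]
  field_simp
  ring

lemma abs_centralSecondDiff_sub_le {f : ℝ → ℝ} {a b c M : ℝ} (hab : a < b) (hbc : b < c)
    (hf : ContDiffOn ℝ 6 f (Icc a c)) (hM : ∀ ξ ∈ Ioo a c, |iteratedDeriv 6 f ξ| ≤ M) :
    |centralSecondDiff f a b c - iteratedDeriv 2 f b - ((c - b - (b - a)) / 3 * iteratedDeriv 3 f b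
        + ((c - b) ^ 2 - (c - b) * (b - a) + (b - a) ^ 2) / 12 * iteratedDeriv 4 f b
        + (c - b - (b - a)) * ((c - b) ^ 2 + (b - a) ^ 2) / 60 * iteratedDeriv 5 f b)|
      ≤ M * ((c - b) ^ 4 + (b - a) ^ 4) / 360 := by
  have hfb : ContDiffAt ℝ 5 f b := (hf.contDiffAt (Icc_mem_nhds hab hbc)).of_le (by norm_num)
  have htaylor : ∀ y ∈ Icc a c, y ≠ b →
      |f y - ∑ k ∈ range 6, iteratedDeriv k f b / k ! * (y - b) ^ k| ≤ M * |y - b| ^ 6 / 720 :=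
    fun y hy hyb => by
      have hsub : uIcc b y ⊆ Icc a c := uIcc_subset_Icc ⟨hab.le, hbc.le⟩ hy
      have := abs_sub_sum_taylor_le (n := 5) hyb.symm (hf.mono hsub) hfb fun ξ hξ =>
        hM ξ ⟨(le_inf hab.le hy.1).trans_lt hξ.1, hξ.2.trans_le (sup_le hbc.le hy.2)⟩
      norm_num [Nat.factorial] at this
      exact this
  have hc := htaylor c ⟨(hab.trans hbc).le, le_rfl⟩ hbc.ne'
  have ha := htaylor a ⟨le_rfl, (hab.trans hbc).le⟩ hab.ne
  have hM0 : 0 ≤ M := (abs_nonneg _).trans (hM b ⟨hab, hbc⟩)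
  obtain ⟨p, hp, rfl⟩ : ∃ p, 0 < p ∧ c = b + p := ⟨c - b, sub_pos.2 hbc, by ring⟩
  obtain ⟨m, hm, rfl⟩ : ∃ m, 0 < m ∧ a = b - m := ⟨b - a, sub_pos.2 hab, by ring⟩
  rw [show b - m - b = -m by ring, abs_neg] at ha
  simp only [add_sub_cancel_left, sub_sub_cancel] at hc ha ⊢
  obtain ⟨Rp, hfp⟩ : ∃ R, f (b + p) = ∑ k ∈ range 6, iteratedDeriv k f b / k ! * p ^ k + R :=
    ⟨_, (add_sub_cancel _ _).symm⟩
  obtain ⟨Rm, hfm⟩ : ∃ R, f (b - m) = ∑ k ∈ range 6, iteratedDeriv k f b / k ! * (-m) ^ k + R :=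
    ⟨_, (add_sub_cancel _ _).symm⟩
  have hRp : |Rp / p| ≤ M * p ^ 5 / 720 := by
    rw [hfp, add_sub_cancel_left, abs_of_pos hp] at hc
    rw [abs_div, abs_of_pos hp, div_le_iff₀ hp]
    exact hc.trans_eq (by ring)
  have hRm : |Rm / m| ≤ M * m ^ 5 / 720 := by
    rw [hfm, add_sub_cancel_left, abs_of_pos hm] at ha
    rw [abs_div, abs_of_pos hm, div_le_iff₀ hm]
    exact ha.trans_eq (by ring)
  rw [centralSecondDiff_eq_add_remainder hp hm hfp hfm, add_assoc, add_sub_cancel_left,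
    add_sub_cancel_left, abs_mul, abs_of_pos (by positivity)]
  calc 2 / (p + m) * |Rp / p + Rm / m| ≤ 2 / (p + m) * (M * p ^ 5 / 720 + M * m ^ 5 / 720) := by
        gcongr
        exact (abs_add_le _ _).trans (add_le_add hRp hRm)
    _ ≤ M * (p ^ 4 + m ^ 4) / 360 := by
      rw [div_mul_eq_mul_div, div_le_div_iff₀ (by positivity) (by norm_num)]
      have : 0 ≤ M * (p * m * (p ^ 3 + m ^ 3)) := by positivity
      nlinarith

lemma abs_sub_cubic_taylor_le {f : ℝ → ℝ} {a b q t K : ℝ} (hf : ContDiffOn ℝ 4 f (Icc a b))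
    (hK : ∀ ξ ∈ Ioo a b, |iteratedDeriv 4 f ξ| ≤ K) (hq : q ∈ Ioo a b) (hqt : q + t ∈ Icc a b)
    (ht : t ≠ 0) :
    |f (q + t) - f q - (t * deriv f q + t ^ 2 / 2 * iteratedDeriv 2 f q
      + t ^ 3 / 6 * iteratedDeriv 3 f q)| ≤ K * t ^ 4 / 24 := by
  have hsub : uIcc q (q + t) ⊆ Icc a b := uIcc_subset_Icc (Ioo_subset_Icc_self hq) hqt
  have := abs_sub_sum_taylor_le (n := 3) (by simpa using ht) (hf.mono hsub)
    ((hf.contDiffAt (Icc_mem_nhds hq.1 hq.2)).of_le (by norm_num)) fun ξ hξ =>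
      hK ξ ⟨(le_inf hq.1.le hqt.1).trans_lt hξ.1, hξ.2.trans_le (sup_le hq.2.le hqt.2)⟩
  norm_num [Finset.sum_range_succ, Nat.factorial] at this
  convert this using 2
  · ring
  · rw [Even.pow_abs ⟨2, rfl⟩]

lemma abs_grid_steps_sub_le {x : ℝ → ℝ} {a b h q K : ℝ} (hx : ContDiffOn ℝ 4 x (Icc a b))
    (hK : ∀ ξ ∈ Ioo a b, |iteratedDeriv 4 x ξ| ≤ K) (hh : 0 < h) (ha : a ≤ q - h)
    (hb : q + h ≤ b) :
    |x (q + h) - x q - (h * deriv x q + h ^ 2 / 2 * iteratedDeriv 2 x q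
        + h ^ 3 / 6 * iteratedDeriv 3 x q)| ≤ K * h ^ 4 / 24 ∧
      |x q - x (q - h) - (h * deriv x q - h ^ 2 / 2 * iteratedDeriv 2 x q
        + h ^ 3 / 6 * iteratedDeriv 3 x q)| ≤ K * h ^ 4 / 24 := by
  have hq : q ∈ Ioo a b := ⟨by linarith, by linarith⟩
  refine ⟨abs_sub_cubic_taylor_le hx hK hq ⟨by linarith, hb⟩ hh.ne', ?_⟩
  have := abs_sub_cubic_taylor_le (t := -h) hx hK hq ⟨by linarith, by linarith⟩
    (neg_ne_zero.2 hh.ne')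
  rw [← abs_neg]
  convert this using 2 <;> ring_nf

lemma abs_sub_mul_le_of_cubic {s h K a b c : ℝ} (h0 : 0 ≤ h) (h1 : h ≤ 1) (hb : |b| ≤ K)
    (hc : |c| ≤ K) (hs : |s - (h * a + h ^ 2 / 2 * b + h ^ 3 / 6 * c)| ≤ K * h ^ 4 / 24) :
    |s - h * a| ≤ K * h ^ 2 := by
  have hK : 0 ≤ K := (abs_nonneg b).trans hb
  have h3 : h ^ 3 ≤ h ^ 2 := pow_le_pow_of_le_one h0 h1 (by norm_num)
  have h4 : h ^ 4 ≤ h ^ 2 := pow_le_pow_of_le_one h0 h1 (by norm_num)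
  calc |s - h * a| = |(s - (h * a + h ^ 2 / 2 * b + h ^ 3 / 6 * c)) + h ^ 2 / 2 * b
        + h ^ 3 / 6 * c| := by congr 1; ring
    _ ≤ K * h ^ 4 / 24 + h ^ 2 / 2 * K + h ^ 3 / 6 * K := by
        refine (abs_add_three _ _ _).trans (add_le_add_three hs ?_ ?_) <;>
          rw [abs_mul, abs_of_nonneg (by positivity)] <;> gcongr
    _ ≤ K * h ^ 2 := by nlinarith

lemma abs_sq_sub_mul_add_sq_sub_le {p m h K a : ℝ} (h0 : 0 ≤ h) (ha : |a| ≤ K)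
    (hp : |p - h * a| ≤ K * h ^ 2) (hm : |m - h * a| ≤ K * h ^ 2)
    (hpm : |(p - h * a) + (m - h * a)| ≤ K * h ^ 3) :
    |p ^ 2 - p * m + m ^ 2 - h ^ 2 * a ^ 2| ≤ 4 * K ^ 2 * h ^ 4 := by
  have hK : 0 ≤ K := (abs_nonneg a).trans ha
  have hmul : ∀ u v : ℝ, |u| ≤ K * h ^ 2 → |v| ≤ K * h ^ 2 → |u * v| ≤ (K * h ^ 2) ^ 2 :=
    fun u v hu hv => by rw [abs_mul, sq]; exact mul_le_mul hu hv (abs_nonneg _) (by positivity)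
  calc |p ^ 2 - p * m + m ^ 2 - h ^ 2 * a ^ 2|
      = |h * a * ((p - h * a) + (m - h * a)) + ((p - h * a) * (p - h * a)
        + (m - h * a) * (m - h * a) - (p - h * a) * (m - h * a))| := by congr 1; ring
    _ ≤ h * K * (K * h ^ 3) + ((K * h ^ 2) ^ 2 + (K * h ^ 2) ^ 2 + (K * h ^ 2) ^ 2) := by
      refine (abs_add_le _ _).trans (add_le_add ?_ ?_)
      · rw [abs_mul, abs_mul, abs_of_nonneg h0]; gcongr
      · exact (abs_sub _ _).trans (add_le_add ((abs_add_le _ _).trans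
          (add_le_add (hmul _ _ hp hp) (hmul _ _ hm hm))) (hmul _ _ hp hm))
    _ = 4 * K ^ 2 * h ^ 4 := by ring

lemma step_estimates_of_taylor {p m h K a₁ a₂ a₃ : ℝ} (h0 : 0 ≤ h) (h1 : h ≤ 1) (ha₁ : |a₁| ≤ K)
    (ha₂ : |a₂| ≤ K) (ha₃ : |a₃| ≤ K)
    (hp : |p - (h * a₁ + h ^ 2 / 2 * a₂ + h ^ 3 / 6 * a₃)| ≤ K * h ^ 4 / 24)
    (hm : |m - (h * a₁ - h ^ 2 / 2 * a₂ + h ^ 3 / 6 * a₃)| ≤ K * h ^ 4 / 24) :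
    |p - m - h ^ 2 * a₂| ≤ K * h ^ 4 / 12 ∧
      |p ^ 2 - p * m + m ^ 2 - h ^ 2 * a₁ ^ 2| ≤ 4 * K ^ 2 * h ^ 4 ∧
      |p| ≤ 2 * K * h ∧ |m| ≤ 2 * K * h := by
  have hK : 0 ≤ K := (abs_nonneg _).trans ha₁
  have hm' : |m - (h * a₁ + h ^ 2 / 2 * -a₂ + h ^ 3 / 6 * a₃)| ≤ K * h ^ 4 / 24 := by
    convert hm using 3; ring
  have hdp := abs_sub_mul_le_of_cubic h0 h1 ha₂ ha₃ hp
  have hdm := abs_sub_mul_le_of_cubic h0 h1 (by rwa [abs_neg]) ha₃ hm'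
  have hsum : |(p - h * a₁) + (m - h * a₁)| ≤ K * h ^ 3 := by
    have h4 : h ^ 4 ≤ h ^ 3 := pow_le_pow_of_le_one h0 h1 (by norm_num)
    calc |(p - h * a₁) + (m - h * a₁)|
        = |(p - (h * a₁ + h ^ 2 / 2 * a₂ + h ^ 3 / 6 * a₃))
          + (m - (h * a₁ - h ^ 2 / 2 * a₂ + h ^ 3 / 6 * a₃)) + h ^ 3 / 3 * a₃| := by congr 1; ring
      _ ≤ K * h ^ 4 / 24 + K * h ^ 4 / 24 + h ^ 3 / 3 * K := by
        refine (abs_add_three _ _ _).trans (add_le_add_three hp hm ?_)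
        rw [abs_mul, abs_of_nonneg (by positivity)]; gcongr
      _ ≤ K * h ^ 3 := by
        have : 0 ≤ K * h ^ 3 := by positivity
        linarith [mul_le_mul_of_nonneg_left h4 hK]
  have hstep : ∀ s, |s - h * a₁| ≤ K * h ^ 2 → |s| ≤ 2 * K * h := fun s hs => by
    have h2 : h ^ 2 ≤ h := by nlinarith
    calc |s| = |(s - h * a₁) + h * a₁| := by congr 1; ring
      _ ≤ K * h ^ 2 + h * K := by
        refine (abs_add_le _ _).trans (add_le_add hs ?_)
        rw [abs_mul, abs_of_nonneg h0]; gcongr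
      _ ≤ 2 * K * h := by nlinarith
  refine ⟨?_, ?_, hstep p hdp, hstep m hdm⟩
  · calc |p - m - h ^ 2 * a₂| = |(p - (h * a₁ + h ^ 2 / 2 * a₂ + h ^ 3 / 6 * a₃))
          - (m - (h * a₁ - h ^ 2 / 2 * a₂ + h ^ 3 / 6 * a₃))| := by congr 1; ring
      _ ≤ K * h ^ 4 / 12 := (abs_sub _ _).trans (by linarith)
  · exact abs_sq_sub_mul_add_sq_sub_le h0 ha₁ hdp hdm hsum

lemma abs_correction_le {p m h K B a₁ a₂ d₃ d₄ d₅ : ℝ} (hK : 0 ≤ K)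
    (hcond : a₂ * d₃ + 1 / 4 * a₁ ^ 2 * d₄ = 0) (hpm : |p - m - h ^ 2 * a₂| ≤ K * h ^ 4 / 12)
    (hquad : |p ^ 2 - p * m + m ^ 2 - h ^ 2 * a₁ ^ 2| ≤ 4 * K ^ 2 * h ^ 4)
    (hdiff : |p - m| ≤ 2 * K * h ^ 2) (hsq : p ^ 2 + m ^ 2 ≤ 8 * K ^ 2 * h ^ 2)
    (hd₃ : |d₃| ≤ B) (hd₄ : |d₄| ≤ B) (hd₅ : |d₅| ≤ B) :
    |(p - m) / 3 * d₃ + (p ^ 2 - p * m + m ^ 2) / 12 * d₄ + (p - m) * (p ^ 2 + m ^ 2) / 60 * d₅|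
      ≤ (K / 36 + K ^ 2 / 3 + 4 * K ^ 3 / 15) * B * h ^ 4 := by
  have hsplit : (p - m) / 3 * d₃ + (p ^ 2 - p * m + m ^ 2) / 12 * d₄
      + (p - m) * (p ^ 2 + m ^ 2) / 60 * d₅
      = (p - m - h ^ 2 * a₂) / 3 * d₃ + (p ^ 2 - p * m + m ^ 2 - h ^ 2 * a₁ ^ 2) / 12 * d₄
        + (p - m) * (p ^ 2 + m ^ 2) / 60 * d₅ := by
    linear_combination (h ^ 2 / 3) * hcond
  calc _ ≤ K * h ^ 4 / 12 / 3 * B + 4 * K ^ 2 * h ^ 4 / 12 * B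
        + 2 * K * h ^ 2 * (8 * K ^ 2 * h ^ 2) / 60 * B := by
        rw [hsplit]
        refine (abs_add_three _ _ _).trans (add_le_add_three ?_ ?_ ?_) <;>
          simp only [abs_mul, abs_div, abs_of_pos (by norm_num : (0 : ℝ) < 3),
            abs_of_pos (by norm_num : (0 : ℝ) < 12), abs_of_pos (by norm_num : (0 : ℝ) < 60),
            abs_of_nonneg (by positivity : 0 ≤ p ^ 2 + m ^ 2)] <;> gcongr
    _ = (K / 36 + K ^ 2 / 3 + 4 * K ^ 3 / 15) * B * h ^ 4 := by ring

lemma abs_le_of_supraconvergence {p m h K B a₁ a₂ d₃ d₄ d₅ Δ : ℝ} (hK : 1 ≤ K) (h0 : 0 ≤ h)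
    (h1 : h ≤ 1) (ha₂ : |a₂| ≤ K) (hpm : |p - m - h ^ 2 * a₂| ≤ K * h ^ 4 / 12)
    (hquad : |p ^ 2 - p * m + m ^ 2 - h ^ 2 * a₁ ^ 2| ≤ 4 * K ^ 2 * h ^ 4)
    (hp : |p| ≤ 2 * K * h) (hm : |m| ≤ 2 * K * h)
    (hd₃ : |d₃| ≤ B) (hd₄ : |d₄| ≤ B) (hd₅ : |d₅| ≤ B)
    (hcond : a₂ * d₃ + 1 / 4 * a₁ ^ 2 * d₄ = 0)
    (hΔ : |Δ - ((p - m) / 3 * d₃ + (p ^ 2 - p * m + m ^ 2) / 12 * d₄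
      + (p - m) * (p ^ 2 + m ^ 2) / 60 * d₅)| ≤ B * (p ^ 4 + m ^ 4) / 360) :
    |Δ| ≤ B * K ^ 4 * h ^ 4 := by
  have hB : 0 ≤ B := (abs_nonneg _).trans hd₃
  have hdiff : |p - m| ≤ 2 * K * h ^ 2 := by
    have : h ^ 4 ≤ h ^ 2 := pow_le_pow_of_le_one h0 h1 (by norm_num)
    calc |p - m| = |(p - m - h ^ 2 * a₂) + h ^ 2 * a₂| := by congr 1; ring
      _ ≤ K * h ^ 4 / 12 + h ^ 2 * K := by
        refine (abs_add_le _ _).trans (add_le_add hpm ?_)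
        rw [abs_mul, abs_of_nonneg (by positivity)]; gcongr
      _ ≤ 2 * K * h ^ 2 := by nlinarith
  have hsq : p ^ 2 + m ^ 2 ≤ 8 * K ^ 2 * h ^ 2 := by
    have := sq_le_sq' (abs_le.mp hp).1 (abs_le.mp hp).2
    have := sq_le_sq' (abs_le.mp hm).1 (abs_le.mp hm).2
    nlinarith
  have hpow : ∀ s : ℝ, |s| ≤ 2 * K * h → s ^ 4 ≤ 16 * K ^ 4 * h ^ 4 := fun s hs => by
    rw [← Even.pow_abs ⟨2, rfl⟩]
    exact (pow_le_pow_left₀ (abs_nonneg s) hs 4).trans_eq (by ring)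
  have hS := abs_correction_le (zero_le_one.trans hK) hcond hpm hquad hdiff hsq hd₃ hd₄ hd₅
  have hK4 : K ≤ K ^ 4 ∧ K ^ 2 ≤ K ^ 4 ∧ K ^ 3 ≤ K ^ 4 :=
    ⟨by simpa using pow_le_pow_right₀ hK (by norm_num : 1 ≤ 4),
      pow_le_pow_right₀ hK (by norm_num), pow_le_pow_right₀ hK (by norm_num)⟩
  calc |Δ| ≤ |Δ - ((p - m) / 3 * d₃ + (p ^ 2 - p * m + m ^ 2) / 12 * d₄
        + (p - m) * (p ^ 2 + m ^ 2) / 60 * d₅)| + |(p - m) / 3 * d₃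
        + (p ^ 2 - p * m + m ^ 2) / 12 * d₄ + (p - m) * (p ^ 2 + m ^ 2) / 60 * d₅| :=
        sub_le_iff_le_add.mp (abs_sub_abs_le_abs_sub _ _)
    _ ≤ B * (32 * K ^ 4 * h ^ 4) / 360 + (K / 36 + K ^ 2 / 3 + 4 * K ^ 3 / 15) * B * h ^ 4 :=
        add_le_add (hΔ.trans (by gcongr; linarith [hpow p hp, hpow m hm])) hS
    _ ≤ B * K ^ 4 * h ^ 4 := by
        have : 0 ≤ B * h ^ 4 := by positivity
        nlinarith [mul_le_mul_of_nonneg_left hK4.1 this, mul_le_mul_of_nonneg_left hK4.2.1 this,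
          mul_le_mul_of_nonneg_left hK4.2.2 this]

theorem stmt_14_general (lam : ℝ)
    (u : ℝ → ℝ) (hu : ContDiff ℝ 2 u)
    (hode : ∀ y : ℝ, deriv (deriv u) y = lam ^ 2 * u y)
    (x : ℝ → ℝ) (hx : ContDiffOn ℝ 4 x (Set.Icc 0 1))
    (hx' : ∀ q ∈ Set.Icc (0 : ℝ) 1, 0 < derivWithin x (Set.Icc 0 1) q)
    (hcond : ∀ q ∈ Set.Icc (0 : ℝ) 1,
      iteratedDerivWithin 2 x (Set.Icc 0 1) q * iteratedDeriv 3 u (x q)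
        + 1 / 4 * (derivWithin x (Set.Icc 0 1) q) ^ 2 * iteratedDeriv 4 u (x q) = 0)
    (ψ : ℝ → ℝ → ℝ)
    (hψ : ψ = fun h q =>
      -(((u (x (q + h)) - u (x q)) / (x (q + h) - x q)
            - (u (x q) - u (x (q - h))) / (x q - x (q - h)))
          / (((x (q + h) - x q) + (x q - x (q - h))) / 2))
        + lam ^ 2 * u (x q)) :
    ∃ C > 0, ∀ h ∈ Set.Ioc (0 : ℝ) (1 / 2), ∀ q ∈ Set.Icc h (1 - h),
      |ψ h q| ≤ C * h ^ 4 := by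
  have hu6 : ContDiff ℝ 6 u := contDiff_infty.mp (contDiff_infty_of_deriv_deriv_eq_mul hu hode) 6
  have hmono : StrictMonoOn x (Icc 0 1) :=
    strictMonoOn_Icc_of_derivWithin_pos hx.continuousOn fun t ht => hx' t (Ioo_subset_Icc_self ht)
  obtain ⟨K, hK1, hK⟩ := exists_bound_iteratedDeriv_Ioo hx
  obtain ⟨B, hB1, hB⟩ := exists_bound_iteratedDeriv_Ioo (hu6.contDiffOn (s := Icc (x 0) (x 1)))
  refine ⟨B * K ^ 4, by positivity, fun h ⟨hh0, hh⟩ q ⟨hqh, hq1⟩ => ?_⟩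
  have ha : 0 ≤ q - h := by linarith
  have hb : q + h ≤ 1 := by linarith
  have hq : q ∈ Ioo (0 : ℝ) 1 := ⟨by linarith, by linarith⟩
  obtain ⟨hlo, hleft, hright, hhi⟩ := hmono.grid_nodes hh0 ha hb
  have hnodes : Ioo (x (q - h)) (x (q + h)) ⊆ Ioo (x 0) (x 1) := Ioo_subset_Ioo hlo hhi
  have hxq : x q ∈ Ioo (x 0) (x 1) := hnodes ⟨hleft, hright⟩
  have hsteps := abs_grid_steps_sub_le hx (hK 4 le_rfl) hh0 ha hb
  obtain ⟨hpm, hquad, hp, hm⟩ := step_estimates_of_taylor hh0.le (by linarith)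
    (iteratedDeriv_one (f := x) ▸ hK 1 (by norm_num) q hq) (hK 2 (by norm_num) q hq)
    (hK 3 (by norm_num) q hq) hsteps.1 hsteps.2
  have hexp := abs_centralSecondDiff_sub_le hleft hright hu6.contDiffOn
    fun ξ hξ => hB 6 le_rfl ξ (hnodes hξ)
  have hcond' := hcond q (Ioo_subset_Icc_self hq)
  rw [iteratedDerivWithin_Icc_eq_iteratedDeriv hx (by norm_num) hq,
    derivWithin_of_mem_nhds (Icc_mem_nhds hq.1 hq.2)] at hcond'
  have hψq : ψ h q
      = -(centralSecondDiff u (x (q - h)) (x q) (x (q + h)) - iteratedDeriv 2 u (x q)) := by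
    rw [hψ, centralSecondDiff, iteratedDeriv_succ, iteratedDeriv_one, hode]
    ring
  rw [hψq, abs_neg]
  exact abs_le_of_supraconvergence hK1 hh0.le (by linarith) (hK 2 (by norm_num) q hq) hpm hquad
    hp hm (hB 3 (by norm_num) _ hxq) (hB 4 (by norm_num) _ hxq) (hB 5 (by norm_num) _ hxq) hcond'
    hexp

/-- under the fourth-order (supraconvergence) condition
x''(q)·u'''(x(q)) + (1/4)·(x'(q))²·u''''(x(q)) = 0 on [0,1], the consistency error of
the central difference scheme on the non-uniform grid generated by x satisfies
|ψ_h(q)| ≤ C·h⁴ uniformly for h ∈ (0,1/2], q ∈ [h, 1−h]. -/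
theorem stmt_14 (lam : ℝ) (hlam : 0 < lam)
    (u : ℝ → ℝ) (hu : ContDiff ℝ 2 u)
    (hode : ∀ y : ℝ, deriv (deriv u) y = lam ^ 2 * u y)
    (x : ℝ → ℝ) (hx : ContDiffOn ℝ 4 x (Set.Icc 0 1))
    (hx' : ∀ q ∈ Set.Icc (0 : ℝ) 1, 0 < derivWithin x (Set.Icc 0 1) q)
    (hcond : ∀ q ∈ Set.Icc (0 : ℝ) 1,
      iteratedDerivWithin 2 x (Set.Icc 0 1) q * iteratedDeriv 3 u (x q)
        + 1 / 4 * (derivWithin x (Set.Icc 0 1) q) ^ 2 * iteratedDeriv 4 u (x q) = 0)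
    (ψ : ℝ → ℝ → ℝ)
    (hψ : ψ = fun h q =>
      -(((u (x (q + h)) - u (x q)) / (x (q + h) - x q)
            - (u (x q) - u (x (q - h))) / (x q - x (q - h)))
          / (((x (q + h) - x q) + (x q - x (q - h))) / 2))
        + lam ^ 2 * u (x q)) :
    ∃ C > 0, ∀ h ∈ Set.Ioc (0 : ℝ) (1 / 2), ∀ q ∈ Set.Icc h (1 - h),
      |ψ h q| ≤ C * h ^ 4 :=
  stmt_14_general lam u hu hode x hx hx' hcond ψ hψ
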